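/- arXiv:1803.09229 — 5 statements merged into one kernel-verified Lean document; each statement's English description precedes it below -/
import Mathlib

section
/- Let a, b be integers with |a| ≥ 2 and |b| ≥ 2, and let A = [[1, a], [0, 1]] and B = [[1, 0], [b, 1]] in SL₂(ℤ). Then A and B generate a free subgroup of rank 2 of SL₂(ℤ); that is, the group homomorphism from the free group on two generators to SL₂(ℤ) sending the two generators to A and B respectively is injective. -/
/-! Ping-pong on `ℤ²`: a nonzero power `Aⁿ = [[1, n a], [0, 1]]` sends `(x, y)` with `|x| < |y|`
to `(x + n a y, y)`, and `|x + n a y| ≥ 2 |y| - |x| > |y|`; symmetrically every nonzero power of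
`B` sends the cone `|y| < |x|` into `|x| < |y|`. Since the two cones are disjoint, no nontrivial
reduced word in `A` and `B` can act as the identity. -/

/-- `A = [[1, a], [0, 1]]` as an element of `SL₂(ℤ)`. -/
def A2 (a : ℤ) : Matrix.SpecialLinearGroup (Fin 2) ℤ :=
  ⟨!![1, a; 0, 1], by simp [Matrix.det_fin_two_of]⟩

/-- `B = [[1, 0], [b, 1]]` as an element of `SL₂(ℤ)`. -/
def B2 (b : ℤ) : Matrix.SpecialLinearGroup (Fin 2) ℤ :=
  ⟨!![1, 0; b, 1], by simp [Matrix.det_fin_two_of]⟩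

open scoped Pointwise Function

/-- The two-set form of `FreeGroup.injective_lift_of_ping_pong`, read off from the ping-pong
lemma for free products via `freeGroupEquivCoprodI`. -/
theorem FreeGroup.injective_lift_of_zpow_ping_pong {ι G α : Type*} [Nontrivial ι] [Group G]
    [MulAction G α] (a : ι → G) (X : ι → Set α) (hXnonempty : ∀ i, (X i).Nonempty)
    (hXdisj : Pairwise (Disjoint on X))
    (hpp : Pairwise fun i j => ∀ n : ℤ, n ≠ 0 → a i ^ n • X j ⊆ X i) :
    Function.Injective (FreeGroup.lift a) := by
  have hlift : FreeGroup.lift a = (Monoid.CoprodI.lift fun i => FreeGroup.lift fun _ => a i).comp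
      freeGroupEquivCoprodI.toMonoidHom := by
    ext i
    simp
  rw [hlift, MonoidHom.coe_comp]
  refine Function.Injective.comp ?_ freeGroupEquivCoprodI.injective
  refine Monoid.CoprodI.lift_injective_of_ping_pong _ ?_ X hXnonempty hXdisj ?_
  · inhabit ι
    exact Or.inr ⟨default, Cardinal.natCast_le_aleph0.trans (Cardinal.aleph0_le_mk _)⟩
  · intro i j hij
    refine FreeGroup.freeGroupUnitEquivInt.forall_congr_left.mpr fun n hn => ?_
    simpa [FreeGroup.freeGroupUnitEquivInt] using hpp hij n (by rintro rfl; exact hn rfl)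

theorem abs_lt_abs_add_mul {R : Type*} [CommRing R] [LinearOrder R] [IsStrictOrderedRing R]
    {c x y : R} (hc : 2 ≤ |c|) (hxy : |x| < |y|) : |y| < |x + c * y| :=
  calc |y| < 2 * |y| - |x| := by linarith
    _ ≤ |c * y| - |x| := by rw [abs_mul]; gcongr
    _ ≤ |x + c * y| := by
      have h := abs_sub (x + c * y) x
      rw [add_sub_cancel_left] at h
      linarith

theorem zpow_eq_apply_mul_of_map_add {G : Type*} [Group G] (f : ℤ → G)
    (hf : ∀ c d, f c * f d = f (c + d)) (c n : ℤ) : f c ^ n = f (n * c) := by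
  let φ : Multiplicative ℤ →* G :=
    MonoidHom.mk' (f ∘ Multiplicative.toAdd) fun c d => (hf c.toAdd d.toAdd).symm
  exact (map_zpow φ (.ofAdd c) n).symm

theorem le_abs_mul_of_ne_zero {c n : ℤ} (hn : n ≠ 0) : |c| ≤ |n * c| := by
  rw [abs_mul]
  exact le_mul_of_one_le_left (abs_nonneg c) (Int.one_le_abs hn)

theorem A2_mul (c d : ℤ) : A2 c * A2 d = A2 (c + d) :=
  Subtype.ext <| (Matrix.mul_fin_two ..).trans <| by simp [A2, add_comm]

theorem B2_mul (c d : ℤ) : B2 c * B2 d = B2 (c + d) :=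
  Subtype.ext <| (Matrix.mul_fin_two ..).trans <| by simp [B2, add_comm]

theorem A2_smul (c : ℤ) (v : Fin 2 → ℤ) : A2 c • v = ![v 0 + c * v 1, v 1] := by
  rw [Matrix.SpecialLinearGroup.smul_def, Matrix.smul_eq_mulVec]
  ext i
  fin_cases i <;> simp [A2, Matrix.vecHead, Matrix.vecTail]

theorem B2_smul (c : ℤ) (v : Fin 2 → ℤ) : B2 c • v = ![v 0, v 1 + c * v 0] := by
  rw [Matrix.SpecialLinearGroup.smul_def, Matrix.smul_eq_mulVec]
  ext i
  fin_cases i <;> simp [B2, Matrix.vecHead, Matrix.vecTail]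
  ring

theorem A2_zpow_smul_subset {a n : ℤ} (ha : 2 ≤ |a|) (hn : n ≠ 0) :
    A2 a ^ n • {v : Fin 2 → ℤ | |v 0| < |v 1|} ⊆ {v | |v 1| < |v 0|} := by
  rw [zpow_eq_apply_mul_of_map_add A2 A2_mul]
  refine Set.smul_set_subset_iff.2 fun v hv => ?_
  simpa [A2_smul] using abs_lt_abs_add_mul (ha.trans (le_abs_mul_of_ne_zero hn)) hv

theorem B2_zpow_smul_subset {b n : ℤ} (hb : 2 ≤ |b|) (hn : n ≠ 0) :
    B2 b ^ n • {v : Fin 2 → ℤ | |v 1| < |v 0|} ⊆ {v | |v 0| < |v 1|} := by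
  rw [zpow_eq_apply_mul_of_map_add B2 B2_mul]
  refine Set.smul_set_subset_iff.2 fun v hv => ?_
  simpa [B2_smul] using abs_lt_abs_add_mul (hb.trans (le_abs_mul_of_ne_zero hn)) hv

/-- for integers `a, b` with `|a| ≥ 2` and `|b| ≥ 2`, the matrices
`A = [[1, a], [0, 1]]` and `B = [[1, 0], [b, 1]]` generate a free subgroup of rank 2 of
`SL₂(ℤ)`: the homomorphism from the free group on two generators sending them to `A` and `B`
is injective. -/
theorem sl2_free (a b : ℤ) (ha : 2 ≤ |a|) (hb : 2 ≤ |b|) :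
    Function.Injective ⇑(FreeGroup.lift ![A2 a, B2 b]) := by
  refine FreeGroup.injective_lift_of_zpow_ping_pong _
    ![{v : Fin 2 → ℤ | |v 1| < |v 0|}, {v | |v 0| < |v 1|}] ?_ ?_ ?_
  · intro i
    fin_cases i
    exacts [⟨![1, 0], by simp⟩, ⟨![0, 1], by simp⟩]
  · intro i j hij
    fin_cases i <;> fin_cases j <;> simp only [ne_eq, not_true_eq_false] at hij <;>
      simpa [Function.onFun, Set.disjoint_left] using fun _ => le_of_lt
  · intro i j hij n hn
    fin_cases i <;> fin_cases j <;> simp only [ne_eq, not_true_eq_false] at hij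
    · exact A2_zpow_smul_subset ha hn
    · exact B2_zpow_smul_subset hb hn
end

section
/- Let a, b be natural numbers with a ≥ 2 and b ≥ 2, and let A = [[1, a, 0], [0, 1, a], [0, 0, 1]] and B = [[1, 0, 0], [b, 1, 0], [0, b, 1]] in SL₃(ℤ). There exists a constant C > 0 such that for every prime p and every non-identity element w of the free group on two generators whose reduced word length is at most C · log p, the image of w under the homomorphism to SL₃(ZMod p) sending the two generators to the mod-p reductions A_p⁴ and B_p⁴ is not the identity. (Equivalently, the girth of the Cayley graph of ⟨A_p⁴, B_p⁴⟩ with respect to {A_p⁴, B_p⁴} is at least C · log p.) -/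
/-!
Ping-pong on `ℤ³`: every nonzero power of `A⁴ = [[1, 4a, 6a²], [0, 1, 4a], [0, 0, 1]]` sends
vectors whose last coordinate dominates to vectors whose first coordinate dominates, and powers
of `B⁴` do the reverse, so `A⁴` and `B⁴` generate a free subgroup of `SL₃(ℤ)`. The image `M` of a
word of length `ℓ` has `ℓ∞`-operator norm at most `K^ℓ`, where `K` bounds the generators and
their inverses. If `w ≠ 1` dies modulo `p`, then `M - 1` is a nonzero integer matrix with all
entries divisible by `p`, so `p ≤ K^ℓ + 1 < K^(2ℓ)`, which fails once `ℓ ≤ log p / (2 log K)`.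
-/

/-- `A = [[1, a, 0], [0, 1, a], [0, 0, 1]]` as an element of `SL₃(ℤ)`. -/
def A3 (a : ℕ) : Matrix.SpecialLinearGroup (Fin 3) ℤ :=
  ⟨!![1, (a : ℤ), 0; 0, 1, (a : ℤ); 0, 0, 1], by
    simp [Matrix.det_fin_three, Matrix.vecHead, Matrix.vecTail]⟩

/-- `B = [[1, 0, 0], [b, 1, 0], [0, b, 1]]` as an element of `SL₃(ℤ)`. -/
def B3 (b : ℕ) : Matrix.SpecialLinearGroup (Fin 3) ℤ :=
  ⟨!![1, 0, 0; (b : ℤ), 1, 0; 0, (b : ℤ), 1], by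
    simp [Matrix.det_fin_three, Matrix.vecHead, Matrix.vecTail]⟩

/-- Entrywise reduction modulo `p`, as a group homomorphism `SL₃(ℤ) →* SL₃(ZMod p)`. -/
def modp3 (p : ℕ) :
    Matrix.SpecialLinearGroup (Fin 3) ℤ →* Matrix.SpecialLinearGroup (Fin 3) (ZMod p) :=
  Matrix.SpecialLinearGroup.map (Int.castRingHom (ZMod p))

open Function Pointwise
open scoped MatrixGroups

attribute [local instance] Matrix.linftyOpSeminormedAddCommGroup Matrix.linftyOpNormedRing

theorem FreeGroup.injective_lift_of_ping_pong_zpow {G ι α : Type*} [Group G] [Nontrivial ι]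
    [MulAction G α] (a : ι → G) (X : ι → Set α) (hX : ∀ i, (X i).Nonempty)
    (hXdisj : Pairwise (Disjoint on X))
    (hpp : Pairwise fun i j => ∀ n : ℤ, n ≠ 0 → a i ^ n • X j ⊆ X i) :
    Injective (FreeGroup.lift a) := by
  have hlift : FreeGroup.lift a =
      (Monoid.CoprodI.lift fun i => FreeGroup.lift fun _ : Unit => a i).comp
        (@freeGroupEquivCoprodI ι).toMonoidHom := by
    ext i
    simp
  rw [hlift, MonoidHom.coe_comp]
  refine Injective.comp ?_ freeGroupEquivCoprodI.injective
  refine Monoid.CoprodI.lift_injective_of_ping_pong _ ?_ X hX hXdisj ?_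
  · refine Or.inr ⟨Classical.arbitrary ι, ?_⟩
    rw [Cardinal.mk_congr FreeGroup.freeGroupUnitEquivInt, Cardinal.mk_int]
    exact (Cardinal.natCast_lt_aleph0 (n := 3)).le
  · intro i j hij
    refine FreeGroup.freeGroupUnitEquivInt.forall_congr_left.mpr fun n hn => ?_
    have hn0 : n ≠ 0 := by
      rintro rfl
      exact hn rfl
    simpa [FreeGroup.freeGroupUnitEquivInt] using hpp hij n hn0

theorem norm_map_lift_le_pow_length {G R α : Type*} [Group G] [SeminormedRing R]
    [NormOneClass R] [DecidableEq α] (φ : G →* R) (g : α → G) {K : ℝ} (hg : ∀ i, ‖φ (g i)‖ ≤ K)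
    (hg_inv : ∀ i, ‖φ (g i)⁻¹‖ ≤ K) (w : FreeGroup α) :
    ‖φ (FreeGroup.lift g w)‖ ≤ K ^ w.toWord.length := by
  suffices ∀ L : List (α × Bool), ‖φ (FreeGroup.lift g (FreeGroup.mk L))‖ ≤ K ^ L.length by
    simpa only [FreeGroup.mk_toWord] using this w.toWord
  intro L
  induction L with
  | nil => simp
  | cons x L ih =>
    have hx : ‖φ (cond x.2 (g x.1) (g x.1)⁻¹)‖ ≤ K := by
      cases x.2
      exacts [hg_inv x.1, hg x.1]
    rw [FreeGroup.lift_mk] at ih ⊢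
    rw [List.map_cons, List.prod_cons, map_mul, List.length_cons, pow_succ']
    exact (norm_mul_le _ _).trans (mul_le_mul hx ih (norm_nonneg _) ((norm_nonneg _).trans hx))

namespace Matrix

theorem norm_entry_le_linfty_opNorm {m n α : Type*} [Fintype m] [Fintype n]
    [SeminormedAddCommGroup α] (A : Matrix m n α) (i : m) (j : n) : ‖A i j‖ ≤ ‖A‖ := by
  have h : ‖A i j‖₊ ≤ ‖A‖₊ := by
    rw [linfty_opNNNorm_def]
    exact (Finset.single_le_sum (fun k _ => zero_le (a := ‖A i k‖₊)) (Finset.mem_univ j)).trans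
      (Finset.le_sup (f := fun i => ∑ j, ‖A i j‖₊) (Finset.mem_univ i))
  exact_mod_cast h

theorem natCast_le_norm_sub_one_of_mapMatrix_eq_one {n : Type*} [Fintype n] [DecidableEq n]
    {M : Matrix n n ℤ} (hM : M ≠ 1) {p : ℕ} (h : (Int.castRingHom (ZMod p)).mapMatrix M = 1) :
    (p : ℝ) ≤ ‖M - 1‖ := by
  obtain ⟨i, j, hij⟩ : ∃ i j, (M - 1) i j ≠ 0 := by
    by_contra! h0
    exact hM (sub_eq_zero.mp (ext h0))
  have hdvd : (p : ℤ) ∣ (M - 1) i j := by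
    have h0 : (Int.castRingHom (ZMod p)).mapMatrix (M - 1) = 0 := by
      rw [map_sub, map_one, h, sub_self]
    rw [← ZMod.intCast_zmod_eq_zero_iff_dvd]
    simpa using congrFun (congrFun h0 i) j
  have hp : (p : ℤ) ≤ |(M - 1) i j| :=
    Int.le_of_dvd (abs_pos.mpr hij) ((dvd_abs _ _).mpr hdvd)
  calc (p : ℝ) ≤ ‖(M - 1) i j‖ := by rw [Int.norm_eq_abs]; exact_mod_cast hp
    _ ≤ ‖M - 1‖ := norm_entry_le_linfty_opNorm _ i j

end Matrix

theorem pow_add_one_lt_of_le_log {K : ℝ} (hK : 2 ≤ K) {ℓ : ℕ} (hℓ : 1 ≤ ℓ) {p : ℕ}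
    (hlen : (ℓ : ℝ) ≤ 1 / (2 * Real.log K) * Real.log p) : K ^ ℓ + 1 < p := by
  have hlogK : 0 < Real.log K := Real.log_pos (by linarith)
  have hlog : (2 * ℓ : ℕ) * Real.log K ≤ Real.log p := by
    rw [div_mul_eq_mul_div, one_mul, le_div_iff₀ (by positivity)] at hlen
    push_cast
    linarith
  have hp : (1 : ℝ) < p := by
    rw [← Real.log_pos_iff (Nat.cast_nonneg p)]
    refine lt_of_lt_of_le (mul_pos ?_ hlogK) hlog
    exact_mod_cast (by omega : 0 < 2 * ℓ)
  have hpow : K ^ (2 * ℓ) ≤ p := (Real.pow_le_iff_le_log (by linarith) (by linarith)).mpr hlog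
  have hKℓ : 2 ≤ K ^ ℓ := hK.trans (le_self_pow₀ (by linarith) (by omega))
  rw [mul_comm, pow_mul, sq] at hpow
  nlinarith

theorem Matrix.SpecialLinearGroup.exists_girth_bound {ι α : Type*} [Fintype ι] [DecidableEq ι]
    [Nonempty ι] [DecidableEq α] (g : α → SpecialLinearGroup ι ℤ)
    (hinj : Injective (FreeGroup.lift g)) {K : ℝ} (hK : 2 ≤ K)
    (hg : ∀ i, ‖(g i : Matrix ι ι ℤ)‖ ≤ K) (hg_inv : ∀ i, ‖(↑(g i)⁻¹ : Matrix ι ι ℤ)‖ ≤ K) :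
    ∃ C : ℝ, 0 < C ∧ ∀ p : ℕ, ∀ w : FreeGroup α, w ≠ 1 →
      (w.toWord.length : ℝ) ≤ C * Real.log p →
      FreeGroup.lift (fun i => SpecialLinearGroup.map (Int.castRingHom (ZMod p)) (g i)) w ≠ 1 := by
  have hlogK : 0 < Real.log K := Real.log_pos (by linarith)
  refine ⟨1 / (2 * Real.log K), by positivity, fun p w hw hlen hred => ?_⟩
  set M : Matrix ι ι ℤ := ↑(FreeGroup.lift g w)
  have hℓ : 1 ≤ w.toWord.length :=
    List.length_pos_iff.mpr (mt FreeGroup.toWord_eq_nil_iff.mp hw)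
  have hM : M ≠ 1 := fun h =>
    hw (hinj (by rw [map_one]; exact Subtype.ext h))
  have hMp : (Int.castRingHom (ZMod p)).mapMatrix M = 1 := by
    let π := SpecialLinearGroup.map (n := ι) (Int.castRingHom (ZMod p))
    rw [← FreeGroup.lift_unique (π.comp (FreeGroup.lift g)) (by simp [π])] at hred
    simpa [M, π] using congrArg Subtype.val hred
  have hnorm : ‖M‖ ≤ K ^ w.toWord.length :=
    norm_map_lift_le_pow_length SpecialLinearGroup.coeMonoidHom g hg hg_inv w
  have hp : (p : ℝ) ≤ K ^ w.toWord.length + 1 :=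
    calc (p : ℝ) ≤ ‖M - 1‖ := natCast_le_norm_sub_one_of_mapMatrix_eq_one hM hMp
      _ ≤ ‖M‖ + ‖(1 : Matrix ι ι ℤ)‖ := norm_sub_le _ _
      _ ≤ K ^ w.toWord.length + 1 := by rw [norm_one]; linarith
  exact (pow_add_one_lt_of_le_log hK hℓ hlen).not_ge hp

def upper3 (β γ : ℤ) : SL(3, ℤ) :=
  ⟨!![1, β, γ; 0, 1, β; 0, 0, 1], by simp [Matrix.det_fin_three]⟩

def lower3 (β γ : ℤ) : SL(3, ℤ) :=
  ⟨!![1, 0, 0; β, 1, 0; γ, β, 1], by simp [Matrix.det_fin_three]⟩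

theorem upper3_mul (β γ β' γ' : ℤ) :
    upper3 β γ * upper3 β' γ' = upper3 (β + β') (γ + γ' + β * β') := by
  ext i j
  rw [Matrix.SpecialLinearGroup.coe_mul, Matrix.mul_apply, Fin.sum_univ_three]
  fin_cases i <;> fin_cases j <;> simp [upper3] <;> ring

theorem lower3_mul (β γ β' γ' : ℤ) :
    lower3 β γ * lower3 β' γ' = lower3 (β + β') (γ + γ' + β * β') := by
  ext i j
  rw [Matrix.SpecialLinearGroup.coe_mul, Matrix.mul_apply, Fin.sum_univ_three]
  fin_cases i <;> fin_cases j <;> simp [lower3]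
  ring

theorem upper3_zero_zero : upper3 0 0 = 1 := by
  ext i j
  fin_cases i <;> fin_cases j <;> rfl

theorem lower3_zero_zero : lower3 0 0 = 1 := by
  ext i j
  fin_cases i <;> fin_cases j <;> rfl

theorem upper3_inv (β γ : ℤ) : (upper3 β γ)⁻¹ = upper3 (-β) (β ^ 2 - γ) := by
  rw [inv_eq_iff_mul_eq_one, upper3_mul, ← upper3_zero_zero]
  congr 1 <;> ring

theorem lower3_inv (β γ : ℤ) : (lower3 β γ)⁻¹ = lower3 (-β) (β ^ 2 - γ) := by
  rw [inv_eq_iff_mul_eq_one, lower3_mul, ← lower3_zero_zero]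
  congr 1 <;> ring

theorem A3_pow_four_zpow (a : ℕ) (n : ℤ) :
    (A3 a ^ 4) ^ n = upper3 (4 * n * a) (2 * a ^ 2 * n * (4 * n - 1)) := by
  have h4 : A3 a ^ 4 = upper3 (4 * a) (6 * a ^ 2) := by
    simp only [pow_succ, pow_zero, one_mul, show A3 a = upper3 a 0 from rfl, upper3_mul]
    congr 1 <;> ring
  induction n using Int.induction_on with
  | zero => simp [upper3_zero_zero]
  | succ n ih =>
    rw [zpow_add_one, ih, h4, upper3_mul]
    congr 1 <;> ring
  | pred n ih =>
    rw [zpow_sub_one, ih, h4, upper3_inv, upper3_mul]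
    congr 1 <;> ring

theorem B3_pow_four_zpow (b : ℕ) (n : ℤ) :
    (B3 b ^ 4) ^ n = lower3 (4 * n * b) (2 * b ^ 2 * n * (4 * n - 1)) := by
  have h4 : B3 b ^ 4 = lower3 (4 * b) (6 * b ^ 2) := by
    simp only [pow_succ, pow_zero, one_mul, show B3 b = lower3 b 0 from rfl, lower3_mul]
    congr 1 <;> ring
  induction n using Int.induction_on with
  | zero => simp [lower3_zero_zero]
  | succ n ih =>
    rw [zpow_add_one, ih, h4, lower3_mul]
    congr 1 <;> ring
  | pred n ih =>
    rw [zpow_sub_one, ih, h4, lower3_inv, lower3_mul]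
    congr 1 <;> ring

theorem norm_upper3_le (β γ : ℤ) :
    ‖(upper3 β γ : Matrix (Fin 3) (Fin 3) ℤ)‖ ≤ 1 + |β| + |γ| := by
  have h : ‖(upper3 β γ : Matrix (Fin 3) (Fin 3) ℤ)‖₊ ≤ Real.toNNReal (1 + |β| + |γ|) := by
    rw [Matrix.linfty_opNNNorm_def]
    refine Finset.sup_le fun i _ => ?_
    rw [Real.le_toNNReal_iff_coe_le (by positivity), NNReal.coe_sum]
    fin_cases i <;> simp [upper3, Fin.sum_univ_three, Int.norm_eq_abs]
    linarith [abs_nonneg (β : ℝ), abs_nonneg (γ : ℝ)]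
  rw [← coe_nnnorm, ← Real.coe_toNNReal _ (by positivity : (0 : ℝ) ≤ 1 + |β| + |γ|)]
  exact_mod_cast h

theorem norm_lower3_le (β γ : ℤ) :
    ‖(lower3 β γ : Matrix (Fin 3) (Fin 3) ℤ)‖ ≤ 1 + |β| + |γ| := by
  have h : ‖(lower3 β γ : Matrix (Fin 3) (Fin 3) ℤ)‖₊ ≤ Real.toNNReal (1 + |β| + |γ|) := by
    rw [Matrix.linfty_opNNNorm_def]
    refine Finset.sup_le fun i _ => ?_
    rw [Real.le_toNNReal_iff_coe_le (by positivity), NNReal.coe_sum]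
    fin_cases i <;> simp [lower3, Fin.sum_univ_three, Int.norm_eq_abs] <;>
      linarith [abs_nonneg (β : ℝ), abs_nonneg (γ : ℝ)]
  rw [← coe_nnnorm, ← Real.coe_toNNReal _ (by positivity : (0 : ℝ) ≤ 1 + |β| + |γ|)]
  exact_mod_cast h

theorem upper3_smul (β γ : ℤ) (v : Fin 3 → ℤ) :
    upper3 β γ • v = ![v 0 + β * v 1 + γ * v 2, v 1 + β * v 2, v 2] := by
  rw [Matrix.SpecialLinearGroup.smul_def, Matrix.smul_eq_mulVec]
  ext i
  fin_cases i <;> simp [upper3, Matrix.mulVec, dotProduct, Fin.sum_univ_three]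

theorem lower3_smul (β γ : ℤ) (v : Fin 3 → ℤ) :
    lower3 β γ • v = ![v 0, v 1 + β * v 0, v 2 + β * v 1 + γ * v 0] := by
  rw [Matrix.SpecialLinearGroup.smul_def, Matrix.smul_eq_mulVec]
  ext i
  fin_cases i <;> simp [lower3, Matrix.mulVec, dotProduct, Fin.sum_univ_three] <;> ring

theorem ping_pong_estimate {β γ p q r : ℤ} (hβ : 8 ≤ |β|) (hγ : 3 * |β| ≤ γ)
    (h : 2 * (|p| + |q|) < |r|) : 2 * (|q + β * r| + |r|) < |p + β * q + γ * r| := by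
  have hq : |q + β * r| ≤ |q| + |β| * |r| := (abs_add_le _ _).trans_eq (by rw [abs_mul])
  have hpq : |p + β * q| ≤ |p| + |β| * |q| := (abs_add_le _ _).trans_eq (by rw [abs_mul])
  have hγr : |γ * r| = γ * |r| := by rw [abs_mul, abs_of_nonneg (by linarith [abs_nonneg β])]
  have hlow : γ * |r| - |p + β * q| ≤ |p + β * q + γ * r| := by
    simpa only [hγr, add_comm (γ * r)] using abs_sub_abs_le_abs_add (γ * r) (p + β * q)
  nlinarith [abs_nonneg p, abs_nonneg q, abs_nonneg r]

def firstDominant : Set (Fin 3 → ℤ) := {v | 2 * (|v 1| + |v 2|) < |v 0|}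

def lastDominant : Set (Fin 3 → ℤ) := {v | 2 * (|v 0| + |v 1|) < |v 2|}

theorem disjoint_firstDominant_lastDominant : Disjoint firstDominant lastDominant := by
  refine Set.disjoint_left.mpr fun v h0 h2 => ?_
  simp only [firstDominant, lastDominant, Set.mem_ofPred_eq] at h0 h2
  linarith [abs_nonneg (v 0), abs_nonneg (v 1), abs_nonneg (v 2)]

theorem upper3_smul_lastDominant_subset {β γ : ℤ} (hβ : 8 ≤ |β|) (hγ : 3 * |β| ≤ γ) :
    upper3 β γ • lastDominant ⊆ firstDominant := by
  rintro _ ⟨v, hv, rfl⟩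
  simpa [firstDominant, upper3_smul] using ping_pong_estimate hβ hγ hv

theorem lower3_smul_firstDominant_subset {β γ : ℤ} (hβ : 8 ≤ |β|) (hγ : 3 * |β| ≤ γ) :
    lower3 β γ • firstDominant ⊆ lastDominant := by
  rintro _ ⟨v, hv, rfl⟩
  have hv' : 2 * (|v 2| + |v 1|) < |v 0| := by
    simp only [firstDominant, Set.mem_ofPred_eq] at hv
    linarith
  simpa [lastDominant, lower3_smul, add_comm] using ping_pong_estimate hβ hγ hv'

theorem eight_le_abs_four_mul_mul {a n : ℤ} (ha : 2 ≤ a) (hn : n ≠ 0) : 8 ≤ |4 * n * a| := by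
  have : 1 ≤ |n| := Int.one_le_abs hn
  rw [abs_mul, abs_mul, abs_of_pos (by norm_num : (0 : ℤ) < 4), abs_of_pos (by linarith : 0 < a)]
  nlinarith

theorem three_mul_abs_four_mul_mul_le {a n : ℤ} (ha : 2 ≤ a) (hn : n ≠ 0) :
    3 * |4 * n * a| ≤ 2 * a ^ 2 * n * (4 * n - 1) := by
  have : 1 ≤ |n| := Int.one_le_abs hn
  rw [abs_mul, abs_mul, abs_of_pos (by norm_num : (0 : ℤ) < 4), abs_of_pos (by linarith : 0 < a)]
  nlinarith [sq_abs n, le_abs_self n, mul_le_mul_of_nonneg_left this (by positivity : 0 ≤ a)]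

theorem injective_lift_A3_B3 {a b : ℕ} (ha : 2 ≤ a) (hb : 2 ≤ b) :
    Injective (FreeGroup.lift ![A3 a ^ 4, B3 b ^ 4]) := by
  have ha' : (2 : ℤ) ≤ a := by exact_mod_cast ha
  have hb' : (2 : ℤ) ≤ b := by exact_mod_cast hb
  refine FreeGroup.injective_lift_of_ping_pong_zpow _ ![firstDominant, lastDominant] ?_ ?_ ?_
  · intro i
    fin_cases i
    exacts [⟨![1, 0, 0], by simp [firstDominant]⟩, ⟨![0, 0, 1], by simp [lastDominant]⟩]
  · intro i j hij
    fin_cases i <;> fin_cases j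
    exacts [absurd rfl hij, disjoint_firstDominant_lastDominant,
      disjoint_firstDominant_lastDominant.symm, absurd rfl hij]
  · intro i j hij n hn
    fin_cases i <;> fin_cases j
    · exact absurd rfl hij
    · simpa [A3_pow_four_zpow] using upper3_smul_lastDominant_subset
        (eight_le_abs_four_mul_mul ha' hn) (three_mul_abs_four_mul_mul_le ha' hn)
    · simpa [B3_pow_four_zpow] using lower3_smul_firstDominant_subset
        (eight_le_abs_four_mul_mul hb' hn) (three_mul_abs_four_mul_mul_le hb' hn)
    · exact absurd rfl hij

theorem norm_A3_pow_four_zpow_le (a : ℕ) {n : ℤ} (hn : n = 1 ∨ n = -1) :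
    ‖(↑((A3 a ^ 4) ^ n) : Matrix (Fin 3) (Fin 3) ℤ)‖ ≤ 1 + 4 * a + 10 * a ^ 2 := by
  rw [A3_pow_four_zpow]
  refine (norm_upper3_le _ _).trans ?_
  rcases hn with rfl | rfl <;> norm_num [abs_of_nonneg] <;> nlinarith

theorem norm_B3_pow_four_zpow_le (b : ℕ) {n : ℤ} (hn : n = 1 ∨ n = -1) :
    ‖(↑((B3 b ^ 4) ^ n) : Matrix (Fin 3) (Fin 3) ℤ)‖ ≤ 1 + 4 * b + 10 * b ^ 2 := by
  rw [B3_pow_four_zpow]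
  refine (norm_lower3_le _ _).trans ?_
  rcases hn with rfl | rfl <;> norm_num [abs_of_nonneg] <;> nlinarith

/-- there is `C > 0` such that for every prime `p`, every nontrivial element of
the free group on two generators of reduced word length at most `C · log p` has nontrivial
image under the homomorphism sending the generators to `A_p⁴` and `B_p⁴`; i.e. the girth of
the Cayley graph of `⟨A_p⁴, B_p⁴⟩` with respect to `{A_p⁴, B_p⁴}` is at least `C · log p`. -/
theorem sl3_girth (a b : ℕ) (ha : 2 ≤ a) (hb : 2 ≤ b) :
    ∃ C : ℝ, 0 < C ∧ ∀ p : ℕ, p.Prime →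
      ∀ w : FreeGroup (Fin 2), w ≠ 1 →
        ((FreeGroup.toWord w).length : ℝ) ≤ C * Real.log p →
        FreeGroup.lift ![(modp3 p (A3 a)) ^ 4, (modp3 p (B3 b)) ^ 4] w ≠ 1 := by
  set K : ℝ := max (1 + 4 * a + 10 * a ^ 2) (1 + 4 * b + 10 * b ^ 2)
  have ha' : (2 : ℝ) ≤ a := by exact_mod_cast ha
  have hK : 2 ≤ K := le_max_of_le_left (by nlinarith)
  have hg : ∀ n : ℤ, n = 1 ∨ n = -1 → ∀ i,
      ‖(↑((![A3 a ^ 4, B3 b ^ 4] i) ^ n) : Matrix (Fin 3) (Fin 3) ℤ)‖ ≤ K := by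
    intro n hn i
    fin_cases i
    exacts [(norm_A3_pow_four_zpow_le a hn).trans (le_max_left _ _),
      (norm_B3_pow_four_zpow_le b hn).trans (le_max_right _ _)]
  obtain ⟨C, hC, hgirth⟩ := Matrix.SpecialLinearGroup.exists_girth_bound _
    (injective_lift_A3_B3 ha hb) hK (by simpa using hg 1 (.inl rfl))
    (by simpa using hg (-1) (.inr rfl))
  refine ⟨C, hC, fun p _ w hw hlen => ?_⟩
  convert hgirth p w hw hlen using 3
  ext i : 1
  fin_cases i <;> simp [modp3]
end

section
/- Let a, b be natural numbers with a ≥ 2, b ≥ 2, a ≡ 1 (mod 3) and b ≡ 2 (mod 3), and let A = [[1, a, 0], [0, 1, a], [0, 0, 1]] and B = [[1, 0, 0], [b, 1, 0], [0, b, 1]] in SL₃(ℤ). Then the reductions modulo 3 of A⁴ and B⁴ generate SL₃(ZMod 3); that is, the subgroup closure of {A₃⁴, B₃⁴} equals all of SL₃(ZMod 3), where A₃, B₃ are the entrywise reductions of A, B modulo 3. -/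
/-!
Since `a ≡ 1` and `b ≡ 2 (mod 3)`, the reductions are those of `A` and `B` for `a = 1`, `b = 2`;
these are unipotent in characteristic `3`, so they equal their fourth powers.
`SL₃` of a field is generated by its elementary transvections (row reduction, with Whitehead's
lemma for the diagonal part). The commutator relation `⁅E_ij(a), E_jk(b)⁆ = E_ik(ab)` reduces
this to transvections at adjacent positions, and over `ZMod p` to those with entry `1`. The four
that are needed are explicit words in the two generators, found by breadth-first search in the
group of order `5616`.
-/

namespace Matrix.SpecialLinearGroup

open scoped commutatorElement

section CommRing

variable {ι R : Type*} [Fintype ι] [DecidableEq ι] [CommRing R]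

theorem transvection_pow {i j : ι} (hij : i ≠ j) (b : R) (n : ℕ) :
    transvection hij b ^ n = transvection hij (n * b) := by
  induction n with
  | zero => simp
  | succ n ih => rw [pow_succ, ih, ← transvection_add]; push_cast; ring_nf

theorem commutatorElement_transvection_transvection {i j k : ι} (hij : i ≠ j) (hjk : j ≠ k)
    (hik : i ≠ k) (a b : R) :
    ⁅transvection hij a, transvection hjk b⁆ = transvection hik (a * b) := by
  rw [commutatorElement_def, transvection_inv, transvection_inv]
  refine Subtype.ext ?_
  simp only [coe_mul, transvection_coe, mul_add, add_mul, one_mul, mul_one, add_zero,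
    single_mul_single_same, single_mul_single_of_ne _ _ _ _ hij.symm,
    single_mul_single_of_ne _ _ _ _ hik.symm, single_mul_single_of_ne _ _ _ _ hjk.symm]
  simp only [neg_mul, mul_neg, neg_neg, ← single_neg]
  abel

theorem transvection_mem_of_forall_adjacent {n : ℕ} {H : Subgroup (SpecialLinearGroup (Fin n) R)}
    (hadj : ∀ (i j : Fin n) (hij : i ≠ j), ((i : ℕ) + 1 = j ∨ (j : ℕ) + 1 = i) →
      ∀ c, transvection hij c ∈ H)
    {i j : Fin n} (hij : i ≠ j) (c : R) : transvection hij c ∈ H := by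
  obtain ⟨d, hd⟩ : ∃ d, ((i : ℤ) - j).natAbs = d := ⟨_, rfl⟩
  induction d using Nat.strong_induction_on generalizing i c with
  | _ d ih =>
  by_cases hij_adj : (i : ℕ) + 1 = j ∨ (j : ℕ) + 1 = i
  · exact hadj i j hij hij_adj c
  obtain ⟨k, hik, hkj, hik_adj, hkj_lt⟩ : ∃ k : Fin n, ∃ (hik : i ≠ k) (hkj : k ≠ j),
      ((i : ℕ) + 1 = k ∨ (k : ℕ) + 1 = i) ∧ ((k : ℤ) - j).natAbs < d := by
    rcases Fin.lt_or_lt_of_ne hij with h | h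
    · exact ⟨⟨i + 1, by omega⟩, by grind, by grind, by grind, by grind⟩
    · exact ⟨⟨i - 1, by omega⟩, by grind, by grind, by grind, by grind⟩
  rw [← mul_one c, ← commutatorElement_transvection_transvection hik hkj hij,
    commutatorElement_def]
  have hik_mem := hadj i k hik hik_adj c
  have hkj_mem := ih _ hkj_lt hkj 1 rfl
  exact mul_mem (mul_mem (mul_mem hik_mem hkj_mem) (inv_mem hik_mem)) (inv_mem hkj_mem)

theorem transvection_mem_of_one_mem {p : ℕ} [NeZero p]
    {H : Subgroup (SpecialLinearGroup ι (ZMod p))} {i j : ι} (hij : i ≠ j)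
    (h : transvection hij 1 ∈ H) (c : ZMod p) : transvection hij c ∈ H := by
  simpa [transvection_pow] using pow_mem h c.val

end CommRing

section Field

variable {ι F : Type*} [Fintype ι] [DecidableEq ι] [Field F]

theorem diag2n_eq_transvection_mul {i j : ι} (hij : i ≠ j) (a : F) (ha : a ≠ 0) :
    diag2n hij a ha = transvection hij a * transvection hij.symm (-a⁻¹) * transvection hij a *
      transvection hij (-1) * transvection hij.symm 1 * transvection hij (-1) := by
  ext k l
  simp only [diag2n_coe, diagonal_apply, coe_mul, transvection_coe, mul_add, mul_one, add_mul,
    one_mul, mul_neg, neg_mul, neg_neg, add_zero, ne_eq, hij, hij.symm, not_false_eq_true,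
    single_mul_single_same, single_mul_single_of_ne, add_apply, one_apply, single_apply]
  split_ifs <;> grind

theorem eq_top_of_forall_transvection_mem [Nontrivial ι] {H : Subgroup (SpecialLinearGroup ι F)}
    (h : ∀ (i j : ι) (hij : i ≠ j) (c : F), transvection hij c ∈ H) : H = ⊤ := by
  refine (Subgroup.eq_top_iff' H).2 fun g ↦
    diagonal_transvection_induction' (· ∈ H) g (fun i j hij c hc ↦ ?_) h fun _ _ ↦ mul_mem
  rw [diag2n_eq_transvection_mul]
  apply_rules [mul_mem]

end Field

end Matrix.SpecialLinearGroup

open Matrix.SpecialLinearGroup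

theorem modp3_A3_mod (p a : ℕ) : modp3 p (A3 (a % p)) = modp3 p (A3 a) := by
  ext i j
  rw [modp3, Matrix.SpecialLinearGroup.map_apply_coe, Matrix.SpecialLinearGroup.map_apply_coe]
  fin_cases i <;> fin_cases j <;> simp [A3]

theorem modp3_B3_mod (p b : ℕ) : modp3 p (B3 (b % p)) = modp3 p (B3 b) := by
  ext i j
  rw [modp3, Matrix.SpecialLinearGroup.map_apply_coe, Matrix.SpecialLinearGroup.map_apply_coe]
  fin_cases i <;> fin_cases j <;> simp [B3]

section ModThree

local notation "𝐀" => modp3 3 (A3 1)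
local notation "𝐁" => modp3 3 (B3 2)

theorem modp3_A3_one_pow_four : 𝐀 ^ 4 = 𝐀 := by decide

theorem modp3_B3_two_pow_four : 𝐁 ^ 4 = 𝐁 := by decide

theorem closure_modp3_A3_one_B3_two_eq_top :
    Subgroup.closure ({𝐀, 𝐁} : Set (Matrix.SpecialLinearGroup (Fin 3) (ZMod 3))) = ⊤ := by
  have hA : 𝐀 ∈ Subgroup.closure {𝐀, 𝐁} := Subgroup.subset_closure (Set.mem_insert _ _)
  have hB : 𝐁 ∈ Subgroup.closure {𝐀, 𝐁} := Subgroup.subset_closure (Set.mem_insert_of_mem _ rfl)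
  refine eq_top_of_forall_transvection_mem fun _ _ hij c ↦ transvection_mem_of_forall_adjacent
    (fun i j hij hadj c ↦ transvection_mem_of_one_mem hij ?_ c) hij c
  obtain ⟨rfl, rfl⟩ | ⟨rfl, rfl⟩ | ⟨rfl, rfl⟩ | ⟨rfl, rfl⟩ :
      (i = 0 ∧ j = 1) ∨ (i = 1 ∧ j = 0) ∨ (i = 1 ∧ j = 2) ∨ (i = 2 ∧ j = 1) := by omega
  · rw [show transvection hij 1 = 𝐀 * 𝐁 * 𝐁 * 𝐀 * 𝐁 * 𝐀 * 𝐀 * 𝐁 * 𝐀 * 𝐁 by revert hij; decide]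
    apply_rules [mul_mem]
  · rw [show transvection hij 1 = 𝐁 * 𝐀 * 𝐀 * 𝐁 * 𝐀 * 𝐁 * 𝐁 * 𝐀 * 𝐁 * 𝐀 * 𝐁 * 𝐁 by
      revert hij; decide]
    apply_rules [mul_mem]
  · rw [show transvection hij 1 = 𝐁 * 𝐀 * 𝐁 * 𝐀 * 𝐀 * 𝐁 * 𝐀 * 𝐁 * 𝐁 * 𝐀 by revert hij; decide]
    apply_rules [mul_mem]
  · rw [show transvection hij 1 = 𝐁 * 𝐁 * 𝐀 * 𝐁 * 𝐀 * 𝐁 * 𝐁 * 𝐀 * 𝐁 * 𝐀 * 𝐀 * 𝐁 by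
      revert hij; decide]
    apply_rules [mul_mem]

end ModThree

theorem sl3_generation_mod_three_general (a b : ℕ)
    (ha3 : a % 3 = 1) (hb3 : b % 3 = 2) :
    Subgroup.closure
      ({(modp3 3 (A3 a)) ^ 4, (modp3 3 (B3 b)) ^ 4} :
        Set (Matrix.SpecialLinearGroup (Fin 3) (ZMod 3))) = ⊤ := by
  rw [← modp3_A3_mod, ha3, ← modp3_B3_mod, hb3, modp3_A3_one_pow_four, modp3_B3_two_pow_four]
  exact closure_modp3_A3_one_B3_two_eq_top

/-- if `a ≡ 1 (mod 3)` and `b ≡ 2 (mod 3)`, then the reductions modulo `3` of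
`A⁴` and `B⁴` generate `SL₃(ZMod 3)`. -/
theorem sl3_generation_mod_three (a b : ℕ) (ha : 2 ≤ a) (hb : 2 ≤ b)
    (ha3 : a % 3 = 1) (hb3 : b % 3 = 2) :
    Subgroup.closure
      ({(modp3 3 (A3 a)) ^ 4, (modp3 3 (B3 b)) ^ 4} :
        Set (Matrix.SpecialLinearGroup (Fin 3) (ZMod 3))) = ⊤ :=
  sl3_generation_mod_three_general a b ha3 hb3
end

section
/- Fix an integer n ≥ 4 and natural numbers a, b with a ≥ 2 and b ≥ 2. Let A, B ∈ SL_n(ℤ) be the n×n matrices with A having 1's on the diagonal, a in each entry (i, i+1) of the superdiagonal, and 0 elsewhere, and B having 1's on the diagonal, b in each entry (i+1, i) of the subdiagonal, and 0 elsewhere. Then for every integer l ≥ 3(n−1), the matrices A^l and B^l generate a free subgroup of rank 2 of SL_n(ℤ); that is, the group homomorphism from the free group on two generators to SL_n(ℤ) sending the two generators to A^l and B^l respectively is injective. -/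
/-- The `n×n` matrix with `1`'s on the diagonal, `a` in each superdiagonal entry `(i, i+1)`,
and `0` elsewhere. -/
def upperA (R : Type*) [CommRing R] (n : ℕ) (a : R) : Matrix (Fin n) (Fin n) R :=
  Matrix.of fun i j => if (i : ℕ) = (j : ℕ) then 1 else if (j : ℕ) = (i : ℕ) + 1 then a else 0

/-- The `n×n` matrix with `1`'s on the diagonal, `b` in each subdiagonal entry `(i+1, i)`,
and `0` elsewhere. -/
def lowerB (R : Type*) [CommRing R] (n : ℕ) (b : R) : Matrix (Fin n) (Fin n) R :=
  Matrix.of fun i j => if (i : ℕ) = (j : ℕ) then 1 else if (i : ℕ) = (j : ℕ) + 1 then b else 0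

theorem upperA_det (R : Type*) [CommRing R] (n : ℕ) (a : R) : (upperA R n a).det = 1 := by
  rw [Matrix.det_of_upperTriangular]
  · simp [upperA]
  · intro i j hij
    have h : (j : ℕ) < (i : ℕ) := hij
    simp only [upperA, Matrix.of_apply]
    split_ifs with h1 h2
    · exfalso; omega
    · exfalso; omega
    · rfl

theorem lowerB_det (R : Type*) [CommRing R] (n : ℕ) (b : R) : (lowerB R n b).det = 1 := by
  rw [Matrix.det_of_lowerTriangular]
  · simp [lowerB]
  · intro i j hij
    have h : (i : ℕ) < (j : ℕ) := hij
    simp only [lowerB, Matrix.of_apply]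
    split_ifs with h1 h2
    · exfalso; omega
    · exfalso; omega
    · rfl

/-- The matrix `upperA` as an element of `SL_n(ℤ)`. -/
def Agen (n : ℕ) (a : ℤ) : Matrix.SpecialLinearGroup (Fin n) ℤ :=
  ⟨upperA ℤ n a, upperA_det ℤ n a⟩

/-- The matrix `lowerB` as an element of `SL_n(ℤ)`. -/
def Bgen (n : ℕ) (b : ℤ) : Matrix.SpecialLinearGroup (Fin n) ℤ :=
  ⟨lowerB ℤ n b, lowerB_det ℤ n b⟩

/-- Entrywise reduction modulo `p`, as a group homomorphism `SL_n(ℤ) →* SL_n(ZMod p)`. -/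
def modpn (n p : ℕ) :
    Matrix.SpecialLinearGroup (Fin n) ℤ →* Matrix.SpecialLinearGroup (Fin n) (ZMod p) :=
  Matrix.SpecialLinearGroup.map (Int.castRingHom (ZMod p))

/-!
For `m ∈ ℤ`, `A ^ m` is the upper triangular Toeplitz matrix of the power series
`(1 + a X) ^ m`, whose `k`-th coefficient is `a ^ k * choose m k`, and `B ^ m` is the transpose
of the corresponding matrix for `b`. When `|a| ≥ 2` and `|m| ≥ 3 (n - 1)` these coefficients
grow at least threefold up to index `n - 1`, so each one exceeds twice the sum of its
predecessors. Consequently `A ^ m` maps vectors whose entries strictly increase in absolute value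
to vectors whose entries strictly decrease in absolute value, and `B ^ m` does the converse. The
ping-pong lemma applied to these two disjoint subsets of `ℤ ^ n` shows that `A ^ l` and `B ^ l`
are free.
-/

open PowerSeries Finset
open scoped Matrix Pointwise

theorem Fin.sum_ite_le_eq_sum_range {M : Type*} [AddCommMonoid M] {n : ℕ} (i : Fin n)
    (g : ℕ → M) :
    ∑ j : Fin n, (if i ≤ j then g (j - i) else 0) = ∑ k ∈ range (n - i), g k := by
  have hIco : (range n).filter ((i : ℕ) ≤ ·) = Ico (i : ℕ) n := by ext; simp [and_comm]
  simp_rw [Fin.le_iff_val_le_val]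
  rw [Fin.sum_univ_eq_sum_range (fun j => if (i : ℕ) ≤ j then g (j - i) else 0) n,
    ← sum_filter, hIco, sum_Ico_eq_sum_range]
  simp

theorem MonoidHom.map_zpow_eq_of_forall_add_one {G M : Type*} [Group G] [Monoid M]
    (φ : G →* M) (g : G) {T : ℤ → M} (h0 : T 0 = 1) (hsucc : ∀ m, T (m + 1) = T m * φ g)
    (m : ℤ) : φ (g ^ m) = T m := by
  induction m using Int.induction_on with
  | zero => rw [zpow_zero, map_one, h0]
  | succ k ih => rw [zpow_add_one, map_mul, ih, hsucc]
  | pred k ih =>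
    rw [zpow_sub_one, map_mul, ih, ← sub_add_cancel (-(k : ℤ)) 1, hsucc, mul_assoc, ← map_mul,
      mul_inv_cancel, map_one, mul_one, sub_add_cancel]

theorem FreeGroup.injective_lift_pair_of_ping_pong {G α : Type*} [Group G] [MulAction G α]
    (g h : G) {X Y : Set α} (hX : X.Nonempty) (hY : Y.Nonempty) (hXY : Disjoint X Y)
    (hg : ∀ m : ℤ, m ≠ 0 → Set.MapsTo (g ^ m • ·) Y X)
    (hh : ∀ m : ℤ, m ≠ 0 → Set.MapsTo (h ^ m • ·) X Y) :
    Function.Injective (FreeGroup.lift ![g, h]) := by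
  have hcoprod : FreeGroup.lift ![g, h] =
      (Monoid.CoprodI.lift fun i => FreeGroup.lift fun _ => ![g, h] i).comp
        (@freeGroupEquivCoprodI (Fin 2)).toMonoidHom := by
    ext i
    simp
  rw [hcoprod, MonoidHom.coe_comp]
  refine Function.Injective.comp ?_ (MulEquiv.injective _)
  refine Monoid.CoprodI.lift_injective_of_ping_pong _ (.inr ⟨0, ?_⟩) ![X, Y] ?_ ?_ ?_
  · rw [FreeGroup.freeGroupUnitEquivInt.cardinal_eq, Cardinal.mk_denumerable]
    exact (Cardinal.natCast_lt_aleph0 (n := 3)).le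
  · intro i; fin_cases i
    exacts [hX, hY]
  · intro i j hij
    fin_cases i <;> fin_cases j
    exacts [absurd rfl hij, hXY, hXY.symm, absurd rfl hij]
  · intro i j hij
    refine FreeGroup.freeGroupUnitEquivInt.forall_congr_left.mpr fun m hm => ?_
    change FreeGroup.of () ^ m ≠ 1 at hm
    have hm0 : m ≠ 0 := by
      rintro rfl
      exact hm (zpow_zero _)
    change FreeGroup.lift (fun _ => ![g, h] i) (FreeGroup.of () ^ m) • ![X, Y] j ⊆ ![X, Y] i
    rw [map_zpow, FreeGroup.lift_apply_of, ← Set.image_smul]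
    fin_cases i <;> fin_cases j
    · exact absurd rfl hij
    · exact (hg m hm0).image_subset
    · exact (hh m hm0).image_subset
    · exact absurd rfl hij

namespace PowerSeries

variable {R : Type*} [Semiring R] (n : ℕ)

/-- The matrix of multiplication by `f` on `R⟦X⟧ ⧸ (X ^ n)` in the basis
`X ^ (n - 1), …, X, 1`. -/
noncomputable def upperToeplitz : R⟦X⟧ →+* Matrix (Fin n) (Fin n) R where
  toFun f := Matrix.of fun i j => if i ≤ j then coeff (j - i : ℕ) f else 0
  map_one' := by
    ext i j
    simp only [Matrix.of_apply, coeff_one, Matrix.one_apply, Fin.ext_iff, Fin.le_iff_val_le_val]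
    split_ifs <;> first | rfl | omega
  map_mul' f g := by
    ext i j
    have hshift : ∀ t : Fin n, (if i ≤ t then coeff (t - i : ℕ) f else 0) *
        (if t ≤ j then coeff (j - t : ℕ) g else 0) = if i ≤ t then coeff (t - i : ℕ) f *
          (if (i : ℕ) + (t - i) ≤ j then coeff (j - (i + (t - i)) : ℕ) g else 0) else 0 := by
      intro t
      simp only [Fin.le_iff_val_le_val]
      by_cases hit : (i : ℕ) ≤ t
      · rw [Nat.add_sub_cancel' hit, if_pos hit, if_pos hit]
      · rw [if_neg hit, if_neg hit, zero_mul]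
    simp only [Matrix.mul_apply, Matrix.of_apply, hshift]
    rw [Fin.sum_ite_le_eq_sum_range i
      (fun k => coeff k f * if (i : ℕ) + k ≤ j then coeff (j - (i + k) : ℕ) g else 0)]
    split_ifs with hij
    · rw [Fin.le_iff_val_le_val] at hij
      rw [coeff_mul, Nat.sum_antidiagonal_eq_sum_range_succ_mk,
        ← sum_subset (range_subset_range.mpr (by omega : (j : ℕ) - i + 1 ≤ n - i))]
      · refine sum_congr rfl fun k hk => ?_
        rw [mem_range] at hk
        rw [if_pos (by omega), Nat.sub_add_eq]
      · intro k _ hk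
        rw [mem_range] at hk
        rw [if_neg (by omega), mul_zero]
    · refine (sum_eq_zero fun k _ => ?_).symm
      rw [Fin.le_iff_val_le_val] at hij
      rw [if_neg (by omega), mul_zero]
  map_zero' := by ext; simp
  map_add' f g := by ext; simp only [map_add, Matrix.add_apply, Matrix.of_apply]; split_ifs <;> simp

theorem upperToeplitz_apply (f : R⟦X⟧) (i j : Fin n) :
    upperToeplitz n f i j = if i ≤ j then coeff (j - i : ℕ) f else 0 := rfl

theorem upperToeplitz_mulVec_apply (f : R⟦X⟧) {v : Fin n → R} {u : ℕ → R}
    (hu : ∀ j : Fin n, u j = v j) (i : Fin n) :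
    (upperToeplitz n f *ᵥ v) i = ∑ k ∈ range (n - i), coeff k f * u (i + k) := by
  rw [Matrix.mulVec, dotProduct, ← Fin.sum_ite_le_eq_sum_range i fun k => coeff k f * u (i + k)]
  refine sum_congr rfl fun j _ => ?_
  rw [upperToeplitz_apply, ite_mul, zero_mul]
  split_ifs with hij
  · rw [Nat.add_sub_cancel' (Fin.le_iff_val_le_val.mp hij), hu]
  · rfl

theorem transpose_upperToeplitz_mulVec (f : R⟦X⟧) (v : Fin n → R) :
    (upperToeplitz n f)ᵀ *ᵥ v = (upperToeplitz n f *ᵥ (v ∘ Fin.rev)) ∘ Fin.rev := by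
  ext i
  simp only [Matrix.mulVec, dotProduct, Function.comp_apply, Matrix.transpose_apply]
  refine Fintype.sum_equiv Fin.revPerm _ _ fun j => ?_
  simp only [Fin.revPerm_apply, Fin.rev_rev, upperToeplitz_apply, Fin.rev_le_rev, Fin.val_rev]
  split_ifs with hji
  · rw [Fin.le_iff_val_le_val] at hji
    congr 3
    omega
  · rfl

end PowerSeries

section Dominance

variable {R : Type*} [CommRing R] [LinearOrder R] [IsStrictOrderedRing R]

theorem abs_sum_mul_le_sum_abs_mul {c u : ℕ → R} {L : R} {p m : ℕ}
    (hu : ∀ k < m, |u (p + k)| ≤ L) :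
    |∑ k ∈ range m, c k * u (p + k)| ≤ (∑ k ∈ range m, |c k|) * L := by
  rw [sum_mul]
  refine (abs_sum_le_sum_abs _ _).trans (sum_le_sum fun k hk => ?_)
  rw [abs_mul]
  exact mul_le_mul_of_nonneg_left (hu k (mem_range.mp hk)) (abs_nonneg _)

theorem abs_sum_shift_lt_of_dominant {c u : ℕ → R} {n i i' : ℕ} {L : R} (hii' : i < i')
    (hi' : i' < n) (hu : ∀ j < n, |u j| ≤ L) (hlast : |u (n - 1)| = L) (hL : 0 < L)
    (hc : 2 * ∑ t ∈ range (n - 1 - i), |c t| < |c (n - 1 - i)|) :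
    |∑ k ∈ range (n - i'), c k * u (i' + k)| < |∑ k ∈ range (n - i), c k * u (i + k)| := by
  set K := n - 1 - i
  set S := ∑ t ∈ range K, |c t|
  have upper : |∑ k ∈ range (n - i'), c k * u (i' + k)| ≤ S * L := by
    refine (abs_sum_mul_le_sum_abs_mul fun k hk => hu _ (by omega)).trans ?_
    gcongr
    exact sum_le_sum_of_subset_of_nonneg (range_subset_range.mpr (by omega))
      fun _ _ _ => abs_nonneg _
  have lower : |c K| * L - S * L ≤ |∑ k ∈ range (n - i), c k * u (i + k)| := by
    have hsplit : ∑ k ∈ range (n - i), c k * u (i + k) =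
        ∑ k ∈ range K, c k * u (i + k) + c K * u (n - 1) := by
      rw [show n - i = K + 1 by omega, sum_range_succ, show i + K = n - 1 by omega]
    have hrest := abs_sum_mul_le_sum_abs_mul (c := c) (p := i) (m := K) fun k hk => hu _ (by omega)
    rw [hsplit]
    have := abs_sub (∑ k ∈ range K, c k * u (i + k) + c K * u (n - 1))
      (∑ k ∈ range K, c k * u (i + k))
    rw [add_sub_cancel_left, abs_mul, hlast] at this
    linarith
  have := mul_lt_mul_of_pos_right hc hL
  linarith

theorem two_mul_sum_add_le_of_three_mul_le {s : ℕ → R} {K : ℕ}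
    (hs : ∀ k < K, 3 * s k ≤ s (k + 1)) : 2 * ∑ t ∈ range K, s t + s 0 ≤ s K := by
  induction K with
  | zero => simp
  | succ K ih =>
    rw [sum_range_succ]
    linarith [ih fun k hk => hs k (by omega), hs K (by omega)]

end Dominance

namespace PowerSeries

variable {R : Type*} [CommRing R] [LinearOrder R] [IsStrictOrderedRing R] {n : ℕ}

theorem strictAnti_abs_upperToeplitz_mulVec {f : R⟦X⟧}
    (hf : ∀ K < n, 2 * ∑ t ∈ range K, |coeff t f| < |coeff K f|) {v : Fin n → R}
    (hv : StrictMono fun i => |v i|) : StrictAnti fun i => |(upperToeplitz n f *ᵥ v) i| := by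
  intro i i' hii'
  have hn : 0 < n := i.pos
  set last : Fin n := ⟨n - 1, by omega⟩
  have hu : ∀ j : Fin n, Function.extend Fin.val v 0 j = v j := Fin.val_injective.extend_apply v 0
  simp only [upperToeplitz_mulVec_apply n f hu]
  have hi'_last : i' ≤ last := Fin.le_iff_val_le_val.mpr (Nat.le_sub_one_of_lt i'.isLt)
  refine abs_sum_shift_lt_of_dominant hii' i'.isLt (fun j hj => ?_) (congrArg (|·|) (hu last))
    ((abs_nonneg _).trans_lt (hv (hii'.trans_le hi'_last))) (hf _ (by omega))
  rw [show j = ((⟨j, hj⟩ : Fin n) : ℕ) from rfl, hu]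
  exact hv.monotone (Fin.le_iff_val_le_val.mpr (Nat.le_sub_one_of_lt hj))

theorem strictMono_abs_transpose_upperToeplitz_mulVec {f : R⟦X⟧}
    (hf : ∀ K < n, 2 * ∑ t ∈ range K, |coeff t f| < |coeff K f|) {v : Fin n → R}
    (hv : StrictAnti fun i => |v i|) : StrictMono fun i => |((upperToeplitz n f)ᵀ *ᵥ v) i| := by
  rw [transpose_upperToeplitz_mulVec]
  exact (strictAnti_abs_upperToeplitz_mulVec hf (hv.comp Fin.rev_strictAnti)).comp
    Fin.rev_strictAnti

end PowerSeries

theorem coeff_rescale_binomialSeries (a m : ℤ) (k : ℕ) :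
    coeff k (rescale a (binomialSeries ℤ m)) = a ^ k * Ring.choose m k := by
  simp

theorem three_mul_abs_pow_mul_choose_le {a m : ℤ} (ha : 2 ≤ |a|) {k : ℕ}
    (hk : 3 * ((k : ℤ) + 1) ≤ |m|) :
    3 * |a ^ k * Ring.choose m k| ≤ |a ^ (k + 1) * Ring.choose m (k + 1)| := by
  have hrec : ((k : ℤ) + 1) * Ring.choose m (k + 1) = Ring.choose m k * (m - k) := by
    simpa [Ring.choose_one_right] using Ring.choose_smul_choose m (Nat.le_succ k)
  have hmk : 3 * ((k : ℤ) + 1) ≤ |a| * |m - k| := by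
    have := abs_sub_abs_le_abs_sub m k
    rw [Nat.abs_cast] at this
    nlinarith
  have hrec' : ((k : ℤ) + 1) * |Ring.choose m (k + 1)| = |Ring.choose m k| * |m - k| := by
    rw [← abs_mul, ← hrec, abs_mul, abs_of_pos (by positivity : (0 : ℤ) < k + 1)]
  refine le_of_mul_le_mul_left ?_ (by positivity : (0 : ℤ) < k + 1)
  calc ((k : ℤ) + 1) * (3 * |a ^ k * Ring.choose m k|)
      = 3 * ((k : ℤ) + 1) * (|a| ^ k * |Ring.choose m k|) := by rw [abs_mul, abs_pow]; ring
    _ ≤ |a| * |m - k| * (|a| ^ k * |Ring.choose m k|) := by gcongr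
    _ = ((k : ℤ) + 1) * |a ^ (k + 1) * Ring.choose m (k + 1)| := by
      rw [abs_mul, abs_pow]
      linear_combination (-|a| ^ (k + 1)) * hrec'

theorem two_mul_sum_abs_coeff_rescale_binomialSeries_lt {a m : ℤ} (ha : 2 ≤ |a|) {K : ℕ}
    (hK : 3 * (K : ℤ) ≤ |m|) :
    2 * ∑ t ∈ range K, |coeff t (rescale a (binomialSeries ℤ m))| <
      |coeff K (rescale a (binomialSeries ℤ m))| := by
  have key := two_mul_sum_add_le_of_three_mul_le
    (s := fun t => |coeff t (rescale a (binomialSeries ℤ m))|) (K := K) fun k hk => by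
      simp only [coeff_rescale_binomialSeries]
      exact three_mul_abs_pow_mul_choose_le ha (by omega)
  simp only [coeff_rescale_binomialSeries, pow_zero, Ring.choose_zero_right, mul_one,
    abs_one] at key ⊢
  linarith

theorem upperA_eq_upperToeplitz (R : Type*) [CommRing R] (n : ℕ) (a : R) :
    upperA R n a = upperToeplitz n (rescale a (1 + X)) := by
  ext i j
  simp only [upperA, upperToeplitz_apply, Matrix.of_apply, coeff_rescale, map_add, coeff_one,
    coeff_X, Fin.le_iff_val_le_val]
  split_ifs <;> simp_all <;> omega

theorem lowerB_eq_transpose_upperA (R : Type*) [CommRing R] (n : ℕ) (b : R) :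
    lowerB R n b = (upperA R n b)ᵀ := by
  ext i j
  simp only [lowerB, upperA, Matrix.transpose_apply, Matrix.of_apply]
  split_ifs <;> first | rfl | omega

theorem upperToeplitz_rescale_binomialSeries_add_one (n : ℕ) (a m : ℤ) :
    upperToeplitz n (rescale a (binomialSeries ℤ (m + 1))) =
      upperToeplitz n (rescale a (binomialSeries ℤ m)) * upperA ℤ n a := by
  rw [upperA_eq_upperToeplitz, ← map_mul, ← map_mul, binomialSeries_add, ← Nat.cast_one,
    binomialSeries_nat, pow_one]

theorem coe_Agen_zpow (n : ℕ) (a m : ℤ) :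
    ((Agen n a ^ m : Matrix.SpecialLinearGroup (Fin n) ℤ) : Matrix (Fin n) (Fin n) ℤ) =
      upperToeplitz n (rescale a (binomialSeries ℤ m)) :=
  Matrix.SpecialLinearGroup.coeMonoidHom.map_zpow_eq_of_forall_add_one (Agen n a)
    (T := fun m => upperToeplitz n (rescale a (binomialSeries ℤ m))) (by simp)
    (upperToeplitz_rescale_binomialSeries_add_one n a) m

theorem coe_Bgen_zpow (n : ℕ) (b m : ℤ) :
    ((Bgen n b ^ m : Matrix.SpecialLinearGroup (Fin n) ℤ) : Matrix (Fin n) (Fin n) ℤ) =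
      (upperToeplitz n (rescale b (binomialSeries ℤ m)))ᵀ := by
  refine Matrix.SpecialLinearGroup.coeMonoidHom.map_zpow_eq_of_forall_add_one (Bgen n b)
    (T := fun m => (upperToeplitz n (rescale b (binomialSeries ℤ m)))ᵀ) (by simp)
    (fun m => ?_) m
  change _ = _ * lowerB ℤ n b
  rw [lowerB_eq_transpose_upperA, ← Matrix.transpose_mul,
    upperToeplitz_rescale_binomialSeries_add_one, upperA_eq_upperToeplitz,
    ((Commute.all _ _).map (upperToeplitz n)).eq]

theorem strictAnti_abs_Agen_zpow_smul {n : ℕ} {a m : ℤ} (ha : 2 ≤ |a|)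
    (hm : 3 * ((n : ℤ) - 1) ≤ |m|) {v : Fin n → ℤ} (hv : StrictMono fun i => |v i|) :
    StrictAnti fun i => |(Agen n a ^ m • v) i| := by
  rw [Matrix.SpecialLinearGroup.smul_def, Matrix.smul_eq_mulVec, coe_Agen_zpow]
  exact strictAnti_abs_upperToeplitz_mulVec
    (fun K hK => two_mul_sum_abs_coeff_rescale_binomialSeries_lt ha (by omega)) hv

theorem strictMono_abs_Bgen_zpow_smul {n : ℕ} {b m : ℤ} (hb : 2 ≤ |b|)
    (hm : 3 * ((n : ℤ) - 1) ≤ |m|) {v : Fin n → ℤ} (hv : StrictAnti fun i => |v i|) :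
    StrictMono fun i => |(Bgen n b ^ m • v) i| := by
  rw [Matrix.SpecialLinearGroup.smul_def, Matrix.smul_eq_mulVec, coe_Bgen_zpow]
  exact strictMono_abs_transpose_upperToeplitz_mulVec
    (fun K hK => two_mul_sum_abs_coeff_rescale_binomialSeries_lt hb (by omega)) hv

theorem strictMono_abs_natCast (n : ℕ) : StrictMono fun i : Fin n => |((i : ℕ) : ℤ)| :=
  fun _ _ hij => by simpa using hij

theorem strictAnti_abs_natCast_rev (n : ℕ) :
    StrictAnti fun i : Fin n => |((Fin.rev i : ℕ) : ℤ)| :=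
  (strictMono_abs_natCast n).comp_strictAnti Fin.rev_strictAnti

theorem not_strictMono_and_strictAnti {β : Type*} [Preorder β] {n : ℕ} (hn : 2 ≤ n)
    {f : Fin n → β} : StrictMono f → ¬ StrictAnti f := fun hmono hanti =>
  let h : (⟨0, by omega⟩ : Fin n) < ⟨1, hn⟩ := Fin.mk_lt_mk.mpr one_pos
  (hmono h).asymm (hanti h)

/-- for `n ≥ 4` and natural numbers `a, b ≥ 2`, with `A, B ∈ SL_n(ℤ)` the
matrices with `1`'s on the diagonal and `a` on the superdiagonal (resp. `b` on the
subdiagonal) and `0` elsewhere, for every `l ≥ 3(n-1)` the matrices `A^l` and `B^l` generate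
a free subgroup of rank 2 of `SL_n(ℤ)`. -/
theorem sln_free_powers (n : ℕ) (hn : 4 ≤ n) (a b : ℕ) (ha : 2 ≤ a) (hb : 2 ≤ b)
    (l : ℕ) (hl : 3 * (n - 1) ≤ l) :
    Function.Injective ⇑(FreeGroup.lift ![(Agen n (a : ℤ)) ^ l, (Bgen n (b : ℤ)) ^ l]) := by
  have hpow : ∀ m : ℤ, m ≠ 0 → 3 * ((n : ℤ) - 1) ≤ |(l : ℤ) * m| := fun m hm => by
    rw [abs_mul, Nat.abs_cast]
    have : (1 : ℤ) ≤ |m| := Int.one_le_abs hm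
    have : 3 * ((n : ℤ) - 1) ≤ l := by omega
    nlinarith
  have ha' : 2 ≤ |(a : ℤ)| := by rw [Nat.abs_cast]; exact_mod_cast ha
  have hb' : 2 ≤ |(b : ℤ)| := by rw [Nat.abs_cast]; exact_mod_cast hb
  refine FreeGroup.injective_lift_pair_of_ping_pong _ _
    (X := {v : Fin n → ℤ | StrictAnti fun i => |v i|}) (Y := {v | StrictMono fun i => |v i|})
    ⟨_, strictAnti_abs_natCast_rev n⟩ ⟨_, strictMono_abs_natCast n⟩
    (Set.disjoint_left.mpr fun _ hanti hmono =>
      not_strictMono_and_strictAnti (by omega) hmono hanti)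
    (fun m hm v hv => ?_) (fun m hm v hv => ?_)
  · rw [Set.mem_setOf_eq, ← zpow_natCast, ← zpow_mul]
    exact strictAnti_abs_Agen_zpow_smul ha' (hpow m hm) hv
  · rw [Set.mem_setOf_eq, ← zpow_natCast, ← zpow_mul]
    exact strictMono_abs_Bgen_zpow_smul hb' (hpow m hm) hv
end

section
/- Let n ≥ 2 be an integer, q a prime, a an integer with a ≡ 1 (mod q), and let t be a natural number with n − 1 < q^{t+1}. Let A ∈ SL_n(ℤ) be the n×n matrix with 1's on the diagonal, a in each entry (i, i+1) of the superdiagonal, and 0 elsewhere. Then for every natural number r ≥ 1, the reduction modulo q of A^{r·q^{t+1} + 1} equals the matrix A' ∈ SL_n(ZMod q) having 1's on the diagonal, 1 in each entry (i, i+1) of the superdiagonal, and 0 elsewhere. (This rests on the fact that q divides the binomial coefficient C(r·q^{t+1} + 1, i) for every i with 2 ≤ i ≤ n − 1.) -/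
/-! Modulo `q` the matrix `A` becomes `1 + N` with `N` strictly upper triangular, so `N ^ n = 0` by
Cayley–Hamilton. In characteristic `q` the Frobenius gives `(1 + N) ^ q ^ (t + 1) = 1 + N ^ q ^ (t + 1)`,
which is `1` since `n ≤ q ^ (t + 1)`; hence the reduction of `A` has order dividing `q ^ (t + 1)`
and `A ^ (r * q ^ (t + 1) + 1)` reduces to the reduction of `A` itself. -/

open Matrix Polynomial

theorem Matrix.IsUpperTriangular.pow_card_eq_zero {ι R : Type*} [Fintype ι] [LinearOrder ι]
    [CommRing R] {M : Matrix ι ι R} (hM : M.IsUpperTriangular) (hdiag : ∀ i, M i i = 0) :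
    M ^ Fintype.card ι = 0 := by
  simpa [charpoly_of_isUpperTriangular M hM, hdiag] using aeval_self_charpoly M

theorem upperA_sub_one_pow_eq_zero (R : Type*) [CommRing R] (n : ℕ) (a : R) :
    (upperA R n a - 1) ^ n = 0 := by
  have hU : (upperA R n a - 1).IsUpperTriangular := fun i j (hji : (j : ℕ) < i) => by
    simp only [Matrix.sub_apply, upperA, of_apply, one_apply, Fin.ext_iff]
    split_ifs <;> first | omega | simp
  simpa using hU.pow_card_eq_zero (by simp [upperA])

theorem upperA_pow_prime_pow_eq_one (R : Type*) [CommRing R] (p : ℕ) [Fact p.Prime] [CharP R p]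
    (n k : ℕ) (a : R) (hn : n ≤ p ^ k) : upperA R n a ^ p ^ k = 1 := by
  -- `Matrix.charP` needs a nonempty index type.
  rcases isEmpty_or_nonempty (Fin n) with _ | _
  · exact Subsingleton.elim _ _
  rw [← add_sub_cancel 1 (upperA R n a), add_pow_char_pow_of_commute p k (Commute.one_left _),
    one_pow, pow_eq_zero_of_le hn (upperA_sub_one_pow_eq_zero R n a), add_zero]

theorem RingHom.mapMatrix_upperA {R S : Type*} [CommRing R] [CommRing S] (f : R →+* S) (n : ℕ)
    (a : R) : f.mapMatrix (upperA R n a) = upperA S n (f a) := by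
  ext i j
  simp only [upperA, mapMatrix_apply, map_apply, of_apply]
  split_ifs <;> simp

theorem sln_power_reduction_general (n q : ℕ) (hq : q.Prime)
    (a : ℤ) (ha : a ≡ 1 [ZMOD (q : ℤ)]) (t : ℕ) (ht : n - 1 < q ^ (t + 1)) :
    ∀ r : ℕ, 1 ≤ r →
      modpn n q ((Agen n a) ^ (r * q ^ (t + 1) + 1)) =
        ⟨upperA (ZMod q) n 1, upperA_det (ZMod q) n 1⟩ := by
  intro r _
  have : Fact q.Prime := ⟨hq⟩
  have ha_mod : Int.castRingHom (ZMod q) a = 1 := by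
    simpa using (ZMod.intCast_eq_intCast_iff a 1 q).mpr ha
  have hA : modpn n q (Agen n a) = ⟨upperA (ZMod q) n 1, upperA_det (ZMod q) n 1⟩ :=
    Subtype.ext <| (RingHom.mapMatrix_upperA _ n a).trans (by rw [ha_mod])
  have hA_pow : modpn n q (Agen n a) ^ q ^ (t + 1) = 1 := by
    rw [hA]
    exact Subtype.ext (upperA_pow_prime_pow_eq_one (ZMod q) q n (t + 1) 1 (by omega))
  rw [map_pow, pow_succ, pow_mul', hA_pow, one_pow, one_mul, hA]

/-- for `n ≥ 2`, a prime `q`, an integer `a ≡ 1 (mod q)` and `t` with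
`n - 1 < q^{t+1}`, for every `r ≥ 1` the reduction modulo `q` of `A^(r·q^{t+1} + 1)` is the
matrix over `ZMod q` with `1`'s on the diagonal and on the superdiagonal and `0`
elsewhere. -/
theorem sln_power_reduction (n q : ℕ) (hn : 2 ≤ n) (hq : q.Prime)
    (a : ℤ) (ha : a ≡ 1 [ZMOD (q : ℤ)]) (t : ℕ) (ht : n - 1 < q ^ (t + 1)) :
    ∀ r : ℕ, 1 ≤ r →
      modpn n q ((Agen n a) ^ (r * q ^ (t + 1) + 1)) =
        ⟨upperA (ZMod q) n 1, upperA_det (ZMod q) n 1⟩ :=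
  sln_power_reduction_general n q hq a ha t ht
end
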